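/- Let n(z) = (2π)^{-1/2} e^{-z²/2} be the standard normal density and let z₀ be the unique positive solution of (z₀²/2)e^{z₀²/2} = e^{z₀²/2} + 1. For all real constants A ≥ 0 and B ∈ ℝ, and every finite signed measure ω on ℝ with total variation norm ‖ω‖_TV ≤ 1 and ∫ n(z) ω(dz) = 0, one has A ∫ z² n(z) ω(dz) + B ∫ z n(z) ω(dz) ≤ (2A e^{-z₀²/2} + |B| e^{-1/2})/√(2π). -/

import Mathlib

/-! With `c = e^{-z₀²/2}`, the equation for `z₀` says exactly `z₀² = 2c + 2`. By vega neutrality the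
butterfly payoff `z² n` may be replaced by `(z² - 2c) n`, and the choice of `z₀` makes the
maximum `2 e^{-(2c+2)/2}` and the minimum `-2c` of `(z² - 2c) e^{-z²/2}` equal in absolute value,
so `|(z² - 2c) n| ≤ 2c/√(2π)`. Together with `|z| e^{-z²/2} ≤ e^{-1/2}` this bounds the payoff
`A (z² - 2c) n + B z n` uniformly by the right-hand side, and integrating against a signed measure
of total variation at most one cannot exceed a uniform bound. -/

open MeasureTheory Set

/-- Integral of a function with respect to a finite signed measure, defined via
the Jordan decomposition. -/
noncomputable def signedIntegral (f : ℝ → ℝ) (ω : SignedMeasure ℝ) : ℝ :=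
  (∫ x, f x ∂ω.toJordanDecomposition.posPart)
    - (∫ x, f x ∂ω.toJordanDecomposition.negPart)

/-- The standard normal density. -/
noncomputable def stdNormalDensity (z : ℝ) : ℝ :=
  (Real.sqrt (2 * Real.pi))⁻¹ * Real.exp (-z ^ 2 / 2)

open Real

section SignedIntegral

variable {f g : ℝ → ℝ} {ω : SignedMeasure ℝ}

lemma signedIntegral_add (hf : Integrable f ω.totalVariation)
    (hg : Integrable g ω.totalVariation) :
    signedIntegral (fun x => f x + g x) ω = signedIntegral f ω + signedIntegral g ω := by
  rw [SignedMeasure.totalVariation, integrable_add_measure] at hf hg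
  simp only [signedIntegral, integral_add hf.1 hg.1, integral_add hf.2 hg.2]
  ring

lemma signedIntegral_const_mul (c : ℝ) :
    signedIntegral (fun x => c * f x) ω = c * signedIntegral f ω := by
  simp only [signedIntegral, integral_const_mul, mul_sub]

lemma signedIntegral_add_const_mul_of_signedIntegral_eq_zero (hf : Integrable f ω.totalVariation)
    (hg : Integrable g ω.totalVariation) (hg₀ : signedIntegral g ω = 0) (a : ℝ) :
    signedIntegral (fun x => f x + a * g x) ω = signedIntegral f ω := by
  rw [signedIntegral_add hf (hg.const_mul a), signedIntegral_const_mul, hg₀, mul_zero, add_zero]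

lemma abs_signedIntegral_le {M : ℝ} (hM : ∀ x, |f x| ≤ M) :
    |signedIntegral f ω| ≤ M * ω.totalVariation.real univ := by
  have hbound (μ : Measure ℝ) [IsFiniteMeasure μ] : |∫ x, f x ∂μ| ≤ M * μ.real univ := by
    rw [← Real.norm_eq_abs]
    exact norm_integral_le_of_norm_le_const (.of_forall hM)
  rw [SignedMeasure.totalVariation, measureReal_add_apply, mul_add]
  exact (abs_sub _ _).trans (add_le_add (hbound _) (hbound _))

lemma signedIntegral_le_of_abs_le {M : ℝ} (hM : ∀ x, |f x| ≤ M)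
    (hω : ω.totalVariation univ ≤ 1) : signedIntegral f ω ≤ M := by
  have htv : ω.totalVariation.real univ ≤ 1 :=
    ENNReal.toReal_le_of_le_ofReal zero_le_one (by simpa using hω)
  calc signedIntegral f ω ≤ M * ω.totalVariation.real univ :=
        (le_abs_self _).trans (abs_signedIntegral_le hM)
    _ ≤ M := mul_le_of_le_one_right ((abs_nonneg _).trans (hM 0)) htv

end SignedIntegral

lemma integrable_of_continuous_of_abs_le {α : Type*} [TopologicalSpace α] [MeasurableSpace α]
    [OpensMeasurableSpace α] {μ : Measure α} [IsFiniteMeasure μ]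
    {f : α → ℝ} (hf : Continuous f) {M : ℝ} (hM : ∀ x, |f x| ≤ M) : Integrable f μ :=
  .of_bound hf.aestronglyMeasurable M (.of_forall hM)

lemma sq_sub_mul_exp_le (a z : ℝ) : (z ^ 2 - a) * exp (-z ^ 2 / 2) ≤ 2 * exp (-(a + 2) / 2) := by
  have h := mul_le_mul_of_nonneg_right (add_one_le_exp ((z ^ 2 - a - 2) / 2))
    (exp_pos (-z ^ 2 / 2)).le
  rw [← exp_add, show (z ^ 2 - a - 2) / 2 + -z ^ 2 / 2 = -(a + 2) / 2 by ring] at h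
  linarith

lemma abs_sq_sub_mul_exp_le {a : ℝ} (ha : 0 ≤ a) (h : 2 * exp (-(a + 2) / 2) = a) (z : ℝ) :
    |(z ^ 2 - a) * exp (-z ^ 2 / 2)| ≤ a := by
  have hexp_le_one : exp (-z ^ 2 / 2) ≤ 1 := exp_le_one_iff.mpr (by nlinarith [sq_nonneg z])
  refine abs_le.mpr ⟨?_, (sq_sub_mul_exp_le a z).trans h.le⟩
  nlinarith [sq_nonneg z, exp_pos (-z ^ 2 / 2)]

lemma abs_mul_exp_le (z : ℝ) : |z| * exp (-z ^ 2 / 2) ≤ exp (-1 / 2) := by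
  have h := sq_sub_mul_exp_le (-1) z
  norm_num at h
  nlinarith [sq_nonneg (|z| - 1), sq_abs z, exp_pos (-z ^ 2 / 2)]

lemma eq_two_mul_exp_add_two {t : ℝ} (h : t / 2 * exp (t / 2) = exp (t / 2) + 1) :
    t = 2 * exp (-t / 2) + 2 := by
  have hinv : exp (t / 2) * exp (-t / 2) = 1 := by rw [← exp_add]; ring_nf; exact exp_zero
  linear_combination (2 * exp (-t / 2)) * h + (2 - t) * hinv

@[fun_prop]
lemma continuous_stdNormalDensity : Continuous stdNormalDensity := by
  unfold stdNormalDensity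
  fun_prop

lemma abs_mul_stdNormalDensity_le {g : ℝ → ℝ} {M : ℝ} (h : ∀ z, |g z * exp (-z ^ 2 / 2)| ≤ M)
    (z : ℝ) : |g z * stdNormalDensity z| ≤ M / √(2 * π) := by
  rw [stdNormalDensity, mul_left_comm, abs_mul, abs_of_pos (by positivity), inv_mul_eq_div]
  exact div_le_div_of_nonneg_right (h z) (sqrt_nonneg _)

lemma abs_stdNormalDensity_le (z : ℝ) : |stdNormalDensity z| ≤ 1 / √(2 * π) := by
  simpa only [one_mul] using abs_mul_stdNormalDensity_le (g := fun _ => 1) (fun z => by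
    rw [one_mul, abs_of_pos (exp_pos _), exp_le_one_iff]
    nlinarith [sq_nonneg z]) z

lemma abs_self_mul_stdNormalDensity_le (z : ℝ) :
    |z * stdNormalDensity z| ≤ exp (-1 / 2) / √(2 * π) :=
  abs_mul_stdNormalDensity_le (g := id) (fun z => by
    rw [id, abs_mul, abs_of_pos (exp_pos _)]
    exact abs_mul_exp_le z) z

theorem profit_le_butterfly_plus_risk_reversal_general
    (z₀ : ℝ)
    (hz₀_eq : (z₀ ^ 2 / 2) * Real.exp (z₀ ^ 2 / 2) = Real.exp (z₀ ^ 2 / 2) + 1)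
    (A B : ℝ) (hA : 0 ≤ A)
    (ω : SignedMeasure ℝ)
    (hTV : ω.totalVariation univ ≤ 1)
    (hneutral : signedIntegral stdNormalDensity ω = 0) :
    A * signedIntegral (fun z => z ^ 2 * stdNormalDensity z) ω
      + B * signedIntegral (fun z => z * stdNormalDensity z) ω ≤
      (2 * A * Real.exp (-z₀ ^ 2 / 2) + |B| * Real.exp (-(1:ℝ)/2)) /
        Real.sqrt (2 * Real.pi) := by
  set c := exp (-z₀ ^ 2 / 2)
  have hc : 2 * exp (-(2 * c + 2) / 2) = 2 * c := by rw [← eq_two_mul_exp_add_two hz₀_eq]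
  have hbutterfly : ∀ z, |(z ^ 2 - 2 * c) * stdNormalDensity z| ≤ 2 * c / √(2 * π) :=
    abs_mul_stdNormalDensity_le (abs_sq_sub_mul_exp_le (by positivity) hc)
  have hI_butterfly : Integrable (fun z => (z ^ 2 - 2 * c) * stdNormalDensity z) ω.totalVariation :=
    integrable_of_continuous_of_abs_le (by fun_prop) hbutterfly
  have hI_riskrev : Integrable (fun z => z * stdNormalDensity z) ω.totalVariation :=
    integrable_of_continuous_of_abs_le (by fun_prop) abs_self_mul_stdNormalDensity_le
  have hsplit : signedIntegral (fun z => z ^ 2 * stdNormalDensity z) ω =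
      signedIntegral (fun z => (z ^ 2 - 2 * c) * stdNormalDensity z) ω := by
    rw [← signedIntegral_add_const_mul_of_signedIntegral_eq_zero hI_butterfly
      (integrable_of_continuous_of_abs_le (by fun_prop) abs_stdNormalDensity_le) hneutral (2 * c)]
    congr 1
    ext z
    ring
  rw [hsplit, ← signedIntegral_const_mul, ← signedIntegral_const_mul,
    ← signedIntegral_add (hI_butterfly.const_mul A) (hI_riskrev.const_mul B)]
  refine signedIntegral_le_of_abs_le (fun z => (abs_add_le _ _).trans ?_) hTV
  rw [abs_mul A, abs_mul B, abs_of_nonneg hA]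
  calc _ ≤ A * (2 * c / √(2 * π)) + |B| * (exp (-1 / 2) / √(2 * π)) := by
        gcongr
        exacts [hbutterfly z, abs_self_mul_stdNormalDensity_le z]
    _ = _ := by ring

/-- For `A ≥ 0`, `B ∈ ℝ`, and every vega-neutral signed measure
of total variation at most one,
`A ∫ z² n dω + B ∫ z n dω ≤ (2A e^{-z₀²/2} + |B| e^{-1/2})/√(2π)`, where `z₀`
is the unique positive solution of `(z₀²/2)e^{z₀²/2} = e^{z₀²/2} + 1`. -/
theorem profit_le_butterfly_plus_risk_reversal
    (z₀ : ℝ) (hz₀_pos : 0 < z₀)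
    (hz₀_eq : (z₀ ^ 2 / 2) * Real.exp (z₀ ^ 2 / 2) = Real.exp (z₀ ^ 2 / 2) + 1)
    (A B : ℝ) (hA : 0 ≤ A)
    (ω : SignedMeasure ℝ)
    (hTV : ω.totalVariation univ ≤ 1)
    (hneutral : signedIntegral stdNormalDensity ω = 0) :
    A * signedIntegral (fun z => z ^ 2 * stdNormalDensity z) ω
      + B * signedIntegral (fun z => z * stdNormalDensity z) ω ≤
      (2 * A * Real.exp (-z₀ ^ 2 / 2) + |B| * Real.exp (-(1:ℝ)/2)) /
        Real.sqrt (2 * Real.pi) :=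
  profit_le_butterfly_plus_risk_reversal_general z₀ hz₀_eq A B hA ω hTV hneutral
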